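/- Let k be an ordered field, I a linearly ordered set, Γ := H[I,k], let (Γ, ψ) be an H-couple over k of Hahn type, and let f ↦ f' be the derivation on the Hahn field K := k((t^Γ)) determined by (t^α)' := −∑_{i ∈ supp α} α_i t^{α + ψ(e_i)} and strong additivity. If f ∈ K is nonzero with f ≺ 1 (i.e., v f > 0), then f' ∼ −α_i f_α t^{α + ψ(α)}, where α := v f and i := min supp α. Consequently, for every nonzero f ∈ K with v f ≠ 0 one has v(f') = v f + ψ(v f). -/

import Mathlib

variable {I k : Type*} [LinearOrder I] [Field k] [LinearOrder k] [IsStrictOrderedRing k]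

/-- The leading (i.e. earliest-index) coefficient of a Hahn series in the Hahn product
`H[I,k] = HahnSeries I k`; it is `0` for the zero series. -/
noncomputable def leadCoeff (γ : HahnSeries I k) : k :=
  letI := Classical.propDecidable (γ = 0)
  if h : γ = 0 then 0
  else γ.coeff (γ.isWF_support.min (HahnSeries.support_nonempty_iff.mpr h))

lemma leadCoeff_zero : leadCoeff (0 : HahnSeries I k) = 0 := by
  simp [leadCoeff]

lemma leadCoeff_eq {γ : HahnSeries I k} {m : I} (hm : γ.coeff m ≠ 0)
    (hmin : ∀ j, γ.coeff j ≠ 0 → m ≤ j) : leadCoeff γ = γ.coeff m := by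
  have h0 : γ ≠ 0 := by
    intro h; subst h; simp at hm
  rw [leadCoeff, dif_neg h0]
  have h1 : m ∈ γ.support := (HahnSeries.mem_support γ m).2 hm
  have h2 := γ.isWF_support.min_mem (HahnSeries.support_nonempty_iff.mpr h0)
  have h3 : m ≤ γ.isWF_support.min (HahnSeries.support_nonempty_iff.mpr h0) :=
    hmin _ ((HahnSeries.mem_support γ _).1 h2)
  have h4 : ¬ m < γ.isWF_support.min (HahnSeries.support_nonempty_iff.mpr h0) :=
    γ.isWF_support.not_lt_min _ h1
  have : m = γ.isWF_support.min (HahnSeries.support_nonempty_iff.mpr h0) :=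
    le_antisymm h3 (not_lt.mp h4)
  rw [← this]

lemma leadCoeff_ne_zero {γ : HahnSeries I k} (h : γ ≠ 0) : leadCoeff γ ≠ 0 := by
  rw [leadCoeff, dif_neg h]
  exact (HahnSeries.mem_support γ _).1 (γ.isWF_support.min_mem _)

lemma leadCoeff_spec {γ : HahnSeries I k} (h : γ ≠ 0) :
    ∃ m : I, γ.coeff m = leadCoeff γ ∧ γ.coeff m ≠ 0 ∧ ∀ j, γ.coeff j ≠ 0 → m ≤ j := by
  refine ⟨γ.isWF_support.min (HahnSeries.support_nonempty_iff.mpr h), ?_, ?_, ?_⟩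
  · rw [leadCoeff, dif_neg h]
  · exact (HahnSeries.mem_support γ _).1 (γ.isWF_support.min_mem _)
  · intro j hj
    exact not_lt.mp (γ.isWF_support.not_lt_min _ ((HahnSeries.mem_support γ j).2 hj))

lemma leadCoeff_neg (γ : HahnSeries I k) : leadCoeff (-γ) = -leadCoeff γ := by
  by_cases h : γ = 0
  · subst h; simp [leadCoeff_zero]
  · obtain ⟨m, hm, hne, hmin⟩ := leadCoeff_spec h
    have : leadCoeff (-γ) = (-γ).coeff m := by
      refine leadCoeff_eq ?_ ?_
      · simpa [HahnSeries.coeff_neg] using hne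
      · intro j hj
        exact hmin j (by simpa [HahnSeries.coeff_neg] using hj)
    rw [this, HahnSeries.coeff_neg, hm]

lemma leadCoeff_add_pos {x y : HahnSeries I k} (hx : 0 < leadCoeff x) (hy : 0 < leadCoeff y) :
    0 < leadCoeff (x + y) := by
  have hx0 : x ≠ 0 := by rintro rfl; simp [leadCoeff_zero] at hx
  have hy0 : y ≠ 0 := by rintro rfl; simp [leadCoeff_zero] at hy
  obtain ⟨mx, hmx, hmxne, hminx⟩ := leadCoeff_spec hx0
  obtain ⟨my, hmy, hmyne, hminy⟩ := leadCoeff_spec hy0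
  rcases lt_trichotomy mx my with hlt | heq | hgt
  · have : leadCoeff (x + y) = (x + y).coeff mx := by
      refine leadCoeff_eq ?_ ?_
      · have : y.coeff mx = 0 := by
          by_contra hc
          exact absurd (hminy mx hc) (not_le.mpr hlt)
        simp [HahnSeries.coeff_add, this, hmxne]
      · intro j hj
        rw [HahnSeries.coeff_add] at hj
        rcases ne_or_eq (x.coeff j) 0 with h | h
        · exact hminx j h
        · have : y.coeff j ≠ 0 := by
            intro h'; rw [h, h'] at hj; simp at hj
          exact le_trans hlt.le (hminy j this)
    rw [this, HahnSeries.coeff_add]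
    have : y.coeff mx = 0 := by
      by_contra hc
      exact absurd (hminy mx hc) (not_le.mpr hlt)
    rw [this, add_zero, hmx]; exact hx
  · subst heq
    have hsum : (x + y).coeff mx = leadCoeff x + leadCoeff y := by
      rw [HahnSeries.coeff_add, hmx, hmy]
    have : leadCoeff (x + y) = (x + y).coeff mx := by
      refine leadCoeff_eq ?_ ?_
      · rw [hsum]; positivity
      · intro j hj
        rw [HahnSeries.coeff_add] at hj
        rcases ne_or_eq (x.coeff j) 0 with h | h
        · exact hminx j h
        · have : y.coeff j ≠ 0 := by
            intro h'; rw [h, h'] at hj; simp at hj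
          exact hminy j this
    rw [this, hsum]; positivity
  · have : leadCoeff (x + y) = (x + y).coeff my := by
      refine leadCoeff_eq ?_ ?_
      · have : x.coeff my = 0 := by
          by_contra hc
          exact absurd (hminx my hc) (not_le.mpr hgt)
        simp [HahnSeries.coeff_add, this, hmyne]
      · intro j hj
        rw [HahnSeries.coeff_add] at hj
        rcases ne_or_eq (y.coeff j) 0 with h | h
        · exact hminy j h
        · have : x.coeff j ≠ 0 := by
            intro h'; rw [h'] at hj; simp [h] at hj
          exact le_trans hgt.le (hminx j this)
    rw [this, HahnSeries.coeff_add]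
    have : x.coeff my = 0 := by
      by_contra hc
      exact absurd (hminx my hc) (not_le.mpr hgt)
    rw [this, zero_add, hmy]; exact hy

/-- The Hahn product ordering on `H[I,k] = HahnSeries I k`:  `γ ≤ δ` iff `γ = δ` or the leading
coefficient of `δ - γ` is positive; so `γ > 0` iff `γ_{i₀} > 0` where `i₀ = min supp γ`. -/
noncomputable instance hahnLinearOrder :
    LinearOrder (HahnSeries I k) :=
  { le := fun γ δ => γ = δ ∨ 0 < leadCoeff (δ - γ)
    le_refl := fun a => Or.inl rfl
    le_trans := by
      rintro a b c (rfl | hab) (h | hbc)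
      · exact Or.inl h
      · exact Or.inr hbc
      · exact Or.inr (h ▸ hab)
      · right
        have := leadCoeff_add_pos hbc hab
        rwa [sub_add_sub_cancel] at this
    le_antisymm := by
      rintro a b (rfl | hab) (h | hba)
      · rfl
      · rfl
      · exact h.symm
      · exfalso
        have : a - b = -(b - a) := by abel
        rw [this, leadCoeff_neg] at hba
        linarith
    le_total := by
      intro a b
      by_cases h : a = b
      · exact Or.inl (Or.inl h)
      · have hne : b - a ≠ 0 := fun hc => h (by linear_combination (norm := abel) -hc)
        rcases (leadCoeff_ne_zero hne).lt_or_gt with hlt | hgt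
        · right; right
          have : a - b = -(b - a) := by abel
          rw [this, leadCoeff_neg]
          linarith
        · exact Or.inl (Or.inr hgt)
    toDecidableLE := Classical.decRel _ }

noncomputable instance hahnLinearOrderedAddCommGroup :
    IsOrderedAddMonoid (HahnSeries I k) :=
  { add_le_add_left := by
      rintro a b (rfl | hab) c
      · exact Or.inl rfl
      · right
        have : b + c - (a + c) = b - a := by abel
        rwa [this]
    add_le_add_right := by
      rintro a b (rfl | hab) c
      · exact Or.inl rfl
      · right
        have : c + b - (c + a) = b - a := by abel
        rwa [this] }

/-- `(H[I,k], ψ)` is an *H-couple over `k` of Hahn type*. -/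
structure IsHCoupleHahnType (ψ : HahnSeries I k → HahnSeries I k) : Prop where
  A1 : ∀ α β : HahnSeries I k, α ≠ 0 → β ≠ 0 → α + β ≠ 0 → min (ψ α) (ψ β) ≤ ψ (α + β)
  A2 : ∀ (α : HahnSeries I k) (n : ℤ), α ≠ 0 → n ≠ 0 → ψ (n • α) = ψ α
  A3 : ∀ α β : HahnSeries I k, β ≠ 0 → 0 < α → ψ β < α + ψ α
  smul_eq : ∀ (α : HahnSeries I k) (c : k), α ≠ 0 → c ≠ 0 → ψ (c • α) = ψ α
  mono : ∀ α β : HahnSeries I k, 0 < α → α ≤ β → ψ β ≤ ψ α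
  hahnType : ∀ α β : HahnSeries I k, α ≠ 0 → β ≠ 0 → ψ α = ψ β →
    ∃ c : k, c ≠ 0 ∧ (α - c • β = 0 ∨ ψ α < ψ (α - c • β))

/-- The `γ`-coefficient of the formal derivative
`(t^α)' = -∑_{i ∈ supp α} α_i t^{α + ψ(e_i)}` of the monomial `t^α` in the Hahn field
`K = k((t^Γ))`, `Γ = H[I,k]`. -/
noncomputable def tderivCoeff (ψ : HahnSeries I k → HahnSeries I k)
    (α γ : HahnSeries I k) : k :=
  -∑ᶠ i ∈ {i : I | i ∈ α.support ∧ α + ψ (HahnSeries.single i 1) = γ}, α.coeff i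

section Aux

open HahnSeries

local notation "e" i => (HahnSeries.single i (1:k) : HahnSeries I k)

lemma le_def' (a b : HahnSeries I k) : a ≤ b ↔ (a = b ∨ 0 < leadCoeff (b - a)) :=
  Iff.rfl

lemma lt_iff_lead (a b : HahnSeries I k) : a < b ↔ 0 < leadCoeff (b - a) := by
  rw [lt_iff_le_and_ne]
  constructor
  · rintro ⟨h, hne⟩
    rcases (le_def' a b).mp h with h | h
    · exact absurd h hne
    · exact h
  · intro h
    have hne : a ≠ b := by
      rintro rfl
      simp [leadCoeff_zero] at h
    exact ⟨(le_def' a b).mpr (Or.inr h), hne⟩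

lemma leadCoeff_eq' {γ : HahnSeries I k} {m : I} (h1 : γ.coeff m ≠ 0)
    (h2 : ∀ j, j < m → γ.coeff j = 0) : leadCoeff γ = γ.coeff m :=
  leadCoeff_eq h1 (fun j hj => not_lt.mp fun hlt => hj (h2 j hlt))

lemma single_smul_one (m : I) (c : k) :
    (HahnSeries.single m c : HahnSeries I k) = c • (e m) := by
  ext j
  rw [HahnSeries.coeff_smul]
  by_cases h : j = m
  · subst h; simp [HahnSeries.coeff_single_same]
  · simp [HahnSeries.coeff_single_of_ne h]

lemma e_ne_zero (m : I) : (e m) ≠ 0 :=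
  HahnSeries.single_ne_zero one_ne_zero

lemma single_pos {m : I} {c : k} (hc : 0 < c) :
    (0 : HahnSeries I k) < HahnSeries.single m c := by
  rw [lt_iff_lead, sub_zero]
  have : leadCoeff (HahnSeries.single m c : HahnSeries I k) = c := by
    rw [leadCoeff_eq' (m := m) (by simp [HahnSeries.coeff_single_same, hc.ne'])
      (fun j hj => HahnSeries.coeff_single_of_ne hj.ne), HahnSeries.coeff_single_same]
  rw [this]; exact hc

variable {ψ : HahnSeries I k → HahnSeries I k} (hψ : IsHCoupleHahnType ψ)
include hψ

/-- `ψ γ = ψ (e m)` where `m` is the minimal index of the support of `γ`. -/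
lemma psi_eq_min {γ : HahnSeries I k} {m : I} (h1 : γ.coeff m ≠ 0)
    (h2 : ∀ j, j < m → γ.coeff j = 0) : ψ γ = ψ (e m) := by
  have hγ : γ ≠ 0 := HahnSeries.ne_zero_of_coeff_ne_zero h1
  -- first, the positive case as an auxiliary claim
  have pos_case : ∀ δ : HahnSeries I k, δ.coeff m ≠ 0 → (∀ j, j < m → δ.coeff j = 0) →
      0 < δ.coeff m → ψ δ = ψ (e m) := by
    intro δ hd1 hd2 hpos
    have hδ : δ ≠ 0 := HahnSeries.ne_zero_of_coeff_ne_zero hd1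
    set c := δ.coeff m with hc
    have hδpos : (0:HahnSeries I k) < δ := by
      rw [lt_iff_lead, sub_zero, leadCoeff_eq' hd1 hd2]; exact hpos
    have hlow : (HahnSeries.single m (c/2) : HahnSeries I k) ≤ δ := by
      refine (le_def' _ _).mpr (Or.inr ?_)
      have hcoeff : (δ - HahnSeries.single m (c/2)).coeff m = c / 2 := by
        rw [HahnSeries.coeff_sub, HahnSeries.coeff_single_same, ← hc]; ring
      have : leadCoeff (δ - HahnSeries.single m (c/2)) = c/2 := by
        rw [leadCoeff_eq' (m := m) (by rw [hcoeff]; positivity) ?_, hcoeff]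
        intro j hj
        rw [HahnSeries.coeff_sub, hd2 j hj, HahnSeries.coeff_single_of_ne hj.ne, sub_zero]
      rw [this]; positivity
    have hhigh : δ ≤ HahnSeries.single m (2*c) := by
      refine (le_def' _ _).mpr (Or.inr ?_)
      have hcoeff : ((HahnSeries.single m (2*c) : HahnSeries I k) - δ).coeff m = c := by
        rw [HahnSeries.coeff_sub, HahnSeries.coeff_single_same, ← hc]; ring
      have : leadCoeff ((HahnSeries.single m (2*c) : HahnSeries I k) - δ) = c := by
        rw [leadCoeff_eq' (m := m) (by rw [hcoeff]; positivity) ?_, hcoeff]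
        intro j hj
        rw [HahnSeries.coeff_sub, hd2 j hj, HahnSeries.coeff_single_of_ne hj.ne, sub_zero]
      rw [this]; positivity
    have hlowpos : (0 : HahnSeries I k) < HahnSeries.single m (c/2) := single_pos (by positivity)
    have h1' : ψ δ ≤ ψ (HahnSeries.single m (c/2)) := hψ.mono _ _ hlowpos hlow
    have h2' : ψ (HahnSeries.single m (2*c)) ≤ ψ δ := hψ.mono _ _ hδpos hhigh
    have e1 : ψ (HahnSeries.single m (c/2) : HahnSeries I k) = ψ (e m) := by
      rw [single_smul_one]; exact hψ.smul_eq _ _ (e_ne_zero m) (by positivity)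
    have e2 : ψ (HahnSeries.single m (2*c) : HahnSeries I k) = ψ (e m) := by
      rw [single_smul_one]; exact hψ.smul_eq _ _ (e_ne_zero m) (by positivity)
    rw [e1] at h1'; rw [e2] at h2'
    exact le_antisymm h1' h2'
  rcases lt_trichotomy (γ.coeff m) 0 with hneg | hzero | hpos
  · have : ψ (-γ) = ψ (e m) := by
      refine pos_case (-γ) ?_ ?_ ?_
      · rw [HahnSeries.coeff_neg]; exact neg_ne_zero.mpr h1
      · intro j hj; rw [HahnSeries.coeff_neg, h2 j hj, neg_zero]
      · rw [HahnSeries.coeff_neg]; linarith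
    rw [← this]
    have : ((-1 : ℤ) • γ) = -γ := by simp
    rw [← this, hψ.A2 γ (-1) hγ (by norm_num)]
  · exact absurd hzero h1
  · exact pos_case γ h1 h2 hpos

lemma e_lt_e {i j : I} (hij : i < j) : (e j) < (e i) := by
  rw [lt_iff_lead]
  have hcoeff : ((e i) - (e j)).coeff i = 1 := by
    rw [HahnSeries.coeff_sub, HahnSeries.coeff_single_same,
      HahnSeries.coeff_single_of_ne hij.ne, sub_zero]
  have : leadCoeff ((e i) - (e j)) = 1 := by
    rw [leadCoeff_eq' (m := i) (by rw [hcoeff]; norm_num) ?_, hcoeff]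
    intro l hl
    rw [HahnSeries.coeff_sub, HahnSeries.coeff_single_of_ne hl.ne,
      HahnSeries.coeff_single_of_ne (hl.trans hij).ne, sub_zero]
  rw [this]; norm_num

lemma psi_e_mono {i j : I} (hij : i ≤ j) : ψ (e i) ≤ ψ (e j) := by
  rcases hij.lt_or_eq with h | rfl
  · exact hψ.mono _ _ (single_pos one_pos) (e_lt_e hψ h).le
  · rfl

lemma psi_e_strict {i j : I} (hij : i < j) : ψ (e i) < ψ (e j) := by
  refine lt_of_le_of_ne (psi_e_mono hψ hij.le) ?_
  intro heq
  obtain ⟨c, hc, hor⟩ := hψ.hahnType (e i) (e j) (e_ne_zero i) (e_ne_zero j) heq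
  have hci : ((e i) - c • (e j)).coeff i = 1 := by
    rw [HahnSeries.coeff_sub, HahnSeries.coeff_smul, HahnSeries.coeff_single_same,
      HahnSeries.coeff_single_of_ne hij.ne]
    simp
  rcases hor with h0 | hlt
  · rw [h0] at hci; simp at hci
  · have : ψ ((e i) - c • (e j)) = ψ (e i) := by
      refine psi_eq_min hψ (by rw [hci]; norm_num) ?_
      intro l hl
      rw [HahnSeries.coeff_sub, HahnSeries.coeff_smul, HahnSeries.coeff_single_of_ne hl.ne,
        HahnSeries.coeff_single_of_ne (hl.trans hij).ne]
      simp
    rw [this] at hlt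
    exact lt_irrefl _ hlt

lemma psi_e_inj {i j : I} (h : ψ (e i) = ψ (e j)) : i = j := by
  rcases lt_trichotomy i j with hlt | heq | hgt
  · exact absurd h (psi_e_strict hψ hlt).ne
  · exact heq
  · exact absurd h.symm (psi_e_strict hψ hgt).ne

/-- The key inequality: exponents coming from larger `α` (or larger indices) are larger. -/
lemma key_lt {α₀ α : HahnSeries I k} {m : I} (hm : α₀.coeff m ≠ 0)
    (hmin : ∀ j, j < m → α₀.coeff j = 0) (hlt : α₀ < α) {i : I} (hi : α.coeff i ≠ 0) :
    α₀ + ψ (e m) < α + ψ (e i) := by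
  rcases le_or_gt m i with hmi | him
  · calc α₀ + ψ (e m) < α + ψ (e m) := by exact add_lt_add_left hlt _
    _ ≤ α + ψ (e i) := add_le_add_right (psi_e_mono hψ hmi) _
  · -- i < m
    have hδpos : (0 : HahnSeries I k) < α - α₀ := sub_pos.mpr hlt
    have hδne : α - α₀ ≠ 0 := hδpos.ne'
    have hδi : (α - α₀).coeff i ≠ 0 := by
      rw [HahnSeries.coeff_sub, hmin i him, sub_zero]; exact hi
    obtain ⟨m', _, hm'ne, hm'min⟩ := leadCoeff_spec hδne
    have hm'i : m' ≤ i := hm'min i hδi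
    have hpsiδ : ψ (α - α₀) = ψ (e m') :=
      psi_eq_min hψ hm'ne (fun j hj => by
        by_contra hc
        exact absurd (hm'min j hc) (not_le.mpr hj))
    have hA3 : ψ (e m) < (α - α₀) + ψ (α - α₀) := hψ.A3 _ _ (e_ne_zero m) hδpos
    have h1 : ψ (e m) < (α - α₀) + ψ (e i) := by
      rw [hpsiδ] at hA3
      exact lt_of_lt_of_le hA3 (add_le_add_right (psi_e_mono hψ hm'i) _)
    have h2 := add_lt_add_right h1 α₀
    have h3 : α₀ + ((α - α₀) + ψ (e i)) = α + ψ (e i) := by abel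
    rwa [h3] at h2

lemma tderivCoeff_eq_zero {α γ : HahnSeries I k}
    (h : ∀ i, α.coeff i ≠ 0 → γ ≠ α + ψ (e i)) : tderivCoeff ψ α γ = 0 := by
  have hS : {i : I | i ∈ α.support ∧ α + ψ (HahnSeries.single i 1) = γ} = ∅ := by
    ext i
    simp only [Set.mem_setOf_eq, Set.mem_empty_iff_false, iff_false, not_and]
    intro hi
    exact fun hc => h i hi hc.symm
  rw [tderivCoeff, hS, finsum_mem_empty, neg_zero]

lemma tderivCoeff_lead {α : HahnSeries I k} {m : I} (hm : α.coeff m ≠ 0)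
    (hmin : ∀ j, α.coeff j ≠ 0 → m ≤ j) :
    tderivCoeff ψ α (α + ψ (e m)) = -α.coeff m := by
  have hS : {i : I | i ∈ α.support ∧ α + ψ (HahnSeries.single i 1) = α + ψ (e m)}
      = {m} := by
    ext i
    simp only [Set.mem_setOf_eq, Set.mem_singleton_iff, HahnSeries.mem_support]
    constructor
    · rintro ⟨hi, heq⟩
      exact psi_e_inj hψ (add_left_cancel heq)
    · rintro rfl
      exact ⟨hm, rfl⟩
  rw [tderivCoeff, hS, finsum_mem_singleton]

end Aux

lemma main_key {ψ : HahnSeries I k → HahnSeries I k} (hψ : IsHCoupleHahnType ψ)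
    (D : HahnSeries (HahnSeries I k) k → HahnSeries (HahnSeries I k) k)
    (hD : ∀ (f : HahnSeries (HahnSeries I k) k) (γ : HahnSeries I k),
      (D f).coeff γ = ∑ᶠ α : HahnSeries I k, f.coeff α * tderivCoeff ψ α γ)
    (f : HahnSeries (HahnSeries I k) k) (hf : f ≠ 0) (ho : f.order ≠ 0) :
    (D f).coeff (f.order + ψ f.order) = -(leadCoeff f.order * f.coeff f.order) ∧
    ∀ γ, γ < f.order + ψ f.order → (D f).coeff γ = 0 := by
  set α₀ := f.order with hα₀
  obtain ⟨m, hmlead, hmne, hmmin⟩ := leadCoeff_spec (γ := α₀) ho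
  have hmlow : ∀ j, j < m → α₀.coeff j = 0 := by
    intro j hj
    by_contra hc
    exact absurd (hmmin j hc) (not_le.mpr hj)
  have hψ0 : ψ α₀ = ψ (HahnSeries.single m (1:k)) := psi_eq_min hψ hmne hmlow
  have horder_le : ∀ α, f.coeff α ≠ 0 → α₀ ≤ α := fun α h =>
    HahnSeries.order_le_of_coeff_ne_zero h
  have hstrict : ∀ α, f.coeff α ≠ 0 → α ≠ α₀ → ∀ i, α.coeff i ≠ 0 →
      α₀ + ψ (HahnSeries.single m (1:k)) < α + ψ (HahnSeries.single i (1:k)) := by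
    intro α hα hne i hi
    exact key_lt hψ hmne hmlow (lt_of_le_of_ne (horder_le α hα) (Ne.symm hne)) hi
  have hbound : ∀ α, f.coeff α ≠ 0 → ∀ i, α.coeff i ≠ 0 →
      α₀ + ψ (HahnSeries.single m (1:k)) ≤ α + ψ (HahnSeries.single i (1:k)) := by
    intro α hα i hi
    by_cases hne : α = α₀
    · rw [hne] at hi ⊢
      exact add_le_add_right (psi_e_mono hψ (hmmin i hi)) α₀
    · exact (hstrict α hα hne i hi).le
  constructor
  · rw [hD]
    rw [finsum_eq_single _ α₀ ?side]
    case side =>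
      intro α hne
      by_cases hα : f.coeff α = 0
      · rw [hα, zero_mul]
      · have hz : tderivCoeff ψ α (α₀ + ψ α₀) = 0 := by
          refine tderivCoeff_eq_zero hψ ?_
          intro i hi heq
          rw [hψ0] at heq
          exact absurd heq (hstrict α hα hne i hi).ne
        rw [hz, mul_zero]
    rw [hψ0, tderivCoeff_lead hψ hmne hmmin, hmlead]
    ring
  · intro γ hγ
    rw [hD]
    refine finsum_eq_zero_of_forall_eq_zero ?_
    intro α
    by_cases hα : f.coeff α = 0
    · rw [hα, zero_mul]
    · have hz : tderivCoeff ψ α γ = 0 := by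
        refine tderivCoeff_eq_zero hψ ?_
        intro i hi heq
        rw [hψ0] at hγ
        exact absurd heq (lt_of_lt_of_le hγ (hbound α hα i hi)).ne
      rw [hz, mul_zero]

/-- Let `(Γ, ψ)`, `Γ := H[I,k]`, be an H-couple over `k` of Hahn type, and let
`D : f ↦ f'` be the derivation of `K := k((t^Γ))` determined by
`(t^α)' = -∑_{i ∈ supp α} α_i t^{α + ψ(e_i)}` and strong additivity (here pinned down by its
coefficient formula).  If `f ≠ 0` and `f ≺ 1` (i.e. `v f > 0`), then
`f' ∼ -α_i f_α t^{α + ψ α}` where `α := v f` and `i := min supp α`; consequently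
`v (f') = v f + ψ (v f)` for every nonzero `f` with `v f ≠ 0`.  (Here `v f = f.order` is the
minimum of the support of `f`, and `g ∼ h` means `v (g - h) > v g`.) -/
theorem hahnField_derivation_leadingTerm (ψ : HahnSeries I k → HahnSeries I k)
    (hψ : IsHCoupleHahnType ψ)
    (D : HahnSeries (HahnSeries I k) k → HahnSeries (HahnSeries I k) k)
    (hD : ∀ (f : HahnSeries (HahnSeries I k) k) (γ : HahnSeries I k),
      (D f).coeff γ = ∑ᶠ α : HahnSeries I k, f.coeff α * tderivCoeff ψ α γ) :
    (∀ f : HahnSeries (HahnSeries I k) k, f ≠ 0 → 0 < f.order →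
      D f ≠ 0 ∧
      (D f - HahnSeries.single (f.order + ψ f.order)
          (-(leadCoeff f.order * f.coeff f.order)) = 0 ∨
        (D f).order <
          (D f - HahnSeries.single (f.order + ψ f.order)
            (-(leadCoeff f.order * f.coeff f.order))).order)) ∧
    (∀ f : HahnSeries (HahnSeries I k) k, f ≠ 0 → f.order ≠ 0 →
      D f ≠ 0 ∧ (D f).order = f.order + ψ f.order) := by
  have key : ∀ f : HahnSeries (HahnSeries I k) k, f ≠ 0 → f.order ≠ 0 →
      D f ≠ 0 ∧ (D f).order = f.order + ψ f.order ∧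
      (D f).coeff (f.order + ψ f.order) = -(leadCoeff f.order * f.coeff f.order) ∧
      ∀ γ, γ < f.order + ψ f.order → (D f).coeff γ = 0 := by
    intro f hf ho
    obtain ⟨hcoeff, hlow⟩ := main_key hψ D hD f hf ho
    have hcne : (D f).coeff (f.order + ψ f.order) ≠ 0 := by
      rw [hcoeff]
      exact neg_ne_zero.mpr
        (mul_ne_zero (leadCoeff_ne_zero ho) (HahnSeries.coeff_order_eq_zero.not.2 hf))
    have hDne : D f ≠ 0 := HahnSeries.ne_zero_of_coeff_ne_zero hcne
    refine ⟨hDne, ?_, hcoeff, hlow⟩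
    refine le_antisymm (HahnSeries.order_le_of_coeff_ne_zero hcne) (not_lt.mp fun hlt => ?_)
    exact HahnSeries.coeff_order_eq_zero.not.2 hDne (hlow _ hlt)
  constructor
  · intro f hf hpos
    have ho : f.order ≠ 0 := ne_of_gt hpos
    obtain ⟨hDne, horder, hcoeff, hlow⟩ := key f hf ho
    refine ⟨hDne, ?_⟩
    set c : k := -(leadCoeff f.order * f.coeff f.order) with hc
    set g := D f - HahnSeries.single (f.order + ψ f.order) c with hg
    by_cases hg0 : g = 0
    · exact Or.inl hg0
    · right
      rw [horder]
      have hgc : ∀ γ, γ ≤ f.order + ψ f.order → g.coeff γ = 0 := by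
        intro γ hγ
        rcases hγ.lt_or_eq with h | rfl
        · rw [hg, HahnSeries.coeff_sub, HahnSeries.coeff_single_of_ne h.ne, hlow _ h, sub_zero]
        · rw [hg, HahnSeries.coeff_sub, HahnSeries.coeff_single_same, hcoeff, hc, sub_self]
      by_contra hcon
      exact HahnSeries.coeff_order_eq_zero.not.2 hg0 (hgc _ (not_lt.mp hcon))
  · intro f hf ho
    obtain ⟨hDne, horder, _, _⟩ := key f hf ho
    exact ⟨hDne, horder⟩
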